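/- Offline performance bound in total-variation form (corrected intermediate form of Theorem 4): for two transition kernels P_src, P_tar and two policies π_D (the empirical behavior policy of the offline source dataset) and π on the same finite state and action spaces (same reward, discount, and initial distribution), J[P_tar](π) − J[P_src](π) ≥ −(4·r_max/(1−γ)²) · Σ_s ν[P_src,π_D](s) · D_TV( π_D(s), π(s) ) − (2γ·r_max/(1−γ)²) · Σ_{(s,a)} ρ[P_src,π_D](s,a) · D_TV( P_src(s,a), P_tar(s,a) ). -/

import Mathlib

open Real

noncomputable section

variable {S A : Type*} [Fintype S] [Fintype A]

/-- Time-`t` state-action distribution `d_t[P,pol]` started from the initial state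
distribution `ρ0`:  `d_0(s,a) = ρ0(s)·pol(s)(a)` and
`d_{t+1}(s',a') = Σ_{(s,a)} d_t(s,a)·P(s,a)(s')·pol(s')(a')`. -/
def dDist (P : S → A → PMF S) (pol : S → PMF A) (ρ0 : PMF S) : ℕ → S × A → ℝ
  | 0 => fun p => (ρ0 p.1).toReal * (pol p.1 p.2).toReal
  | (t + 1) => fun p' =>
      ∑ p : S × A, dDist P pol ρ0 t p * (P p.1 p.2 p'.1).toReal * (pol p'.1 p'.2).toReal

/-- Normalized state-action occupancy `ρ[P,pol](s,a) = (1−γ)·Σ_t γ^t·d_t[P,pol](s,a)`. -/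
def occ (P : S → A → PMF S) (pol : S → PMF A) (ρ0 : PMF S) (γ : ℝ) (p : S × A) : ℝ :=
  (1 - γ) * ∑' t : ℕ, γ ^ t * dDist P pol ρ0 t p

/-- Normalized state occupancy `ν[P,pol](s) = Σ_a ρ[P,pol](s,a)`. -/
def stateOcc (P : S → A → PMF S) (pol : S → PMF A) (ρ0 : PMF S) (γ : ℝ) (s : S) : ℝ :=
  ∑ a : A, occ P pol ρ0 γ (s, a)

/-- Expected discounted return `J[P](pol) = Σ_t γ^t Σ_{(s,a)} d_t[P,pol](s,a)·r(s,a)`. -/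
def Jret (P : S → A → PMF S) (pol : S → PMF A) (ρ0 : PMF S) (r : S → A → ℝ) (γ : ℝ) : ℝ :=
  ∑' t : ℕ, γ ^ t * ∑ p : S × A, dDist P pol ρ0 t p * r p.1 p.2

/-- Value function `V[P,pol](s)`: the return with the recursion started from the point
distribution at `s` (i.e. `d_0(s',a) = 1[s'=s]·pol(s')(a)`). -/
def Vval (P : S → A → PMF S) (pol : S → PMF A) (r : S → A → ℝ) (γ : ℝ) (s : S) : ℝ :=
  Jret P pol (PMF.pure s) r γ

/-- Action-value function `Q[P,pol](s,a) = r(s,a) + γ·Σ_{s'} P(s,a)(s')·V[P,pol](s')`. -/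
def Qval (P : S → A → PMF S) (pol : S → PMF A) (r : S → A → ℝ) (γ : ℝ) (s : S) (a : A) : ℝ :=
  r s a + γ * ∑ s' : S, (P s a s').toReal * Vval P pol r γ s'

/-- Total variation distance between two pmfs on a finite type:
`D_TV(p,q) = (1/2)·Σ_x |p(x) − q(x)|`. -/
def dTV {X : Type*} [Fintype X] (p q : PMF X) : ℝ :=
  (1 / 2) * ∑ x : X, |(p x).toReal - (q x).toReal|

/-- Kullback–Leibler divergence between two pmfs on a finite type (with `q` everywhere
positive): `D_KL(p‖q) = Σ_x p(x)·log(p(x)/q(x))`, with the convention `0·log 0 = 0`. -/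
def dKL {X : Type*} [Fintype X] (p q : PMF X) : ℝ :=
  ∑ x : X, (p x).toReal * Real.log ((p x).toReal / (q x).toReal)

/-- Shannon entropy of a pmf on a finite type, `H(p) = −Σ_x p(x)·log p(x)`,
with the convention `0·log 0 = 0`. -/
def entropyPMF {X : Type*} [Fintype X] (p : PMF X) : ℝ :=
  - ∑ x : X, (p x).toReal * Real.log (p x).toReal

end

/-!
Let `d_t`, `d'_t` be the state-action distributions of `(P, μ)` and `(Q, π)`. A step of either
chain moves the state through the kernel and then draws the action from the policy, so the
`ℓ¹` error `e_t = ‖d_t - d'_t‖₁` obeys `e_0 = 2 E_{d_0} D_TV(μ, π)` and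
`e_{t+1} ≤ e_t + 2 E_{d_t} D_TV(P, Q) + 2 E_{d_{t+1}} D_TV(μ, π)`. Discounting this recursion
bounds `(1 - γ) Σ_t γ^t e_t` by the occupancy-weighted kernel and policy gaps of `(P, μ)`, while
`|J[P](μ) - J[Q](π)| ≤ r_max Σ_t γ^t e_t`. The theorem follows by comparing both
`J[P_tar](π)` and `J[P_src](π)` with `J[P_src](π_D)`, whose occupancies weight the right-hand
side.
-/

open Finset

lemma PMF.sum_toReal_eq_one {X : Type*} [Fintype X] (p : PMF X) : ∑ x, (p x).toReal = 1 := by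
  have h := p.tsum_coe
  rw [tsum_fintype] at h
  rw [← ENNReal.toReal_sum fun x _ => p.apply_ne_top x, h, ENNReal.toReal_one]

lemma sum_abs_add_le {ι : Type*} [Fintype ι] (f g : ι → ℝ) :
    ∑ i, |f i + g i| ≤ ∑ i, |f i| + ∑ i, |g i| :=
  (sum_le_sum fun i _ => abs_add_le (f i) (g i)).trans_eq sum_add_distrib

section TotalVariation

variable {X : Type*} [Fintype X]

lemma dTV_nonneg (p q : PMF X) : 0 ≤ dTV p q := by
  unfold dTV
  positivity

lemma dTV_le_one (p q : PMF X) : dTV p q ≤ 1 := by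
  have h : ∑ x, |(p x).toReal - (q x).toReal| ≤ ∑ x, ((p x).toReal + (q x).toReal) :=
    sum_le_sum fun x _ => (abs_sub _ _).trans_eq <| by
      rw [abs_of_nonneg ENNReal.toReal_nonneg, abs_of_nonneg ENNReal.toReal_nonneg]
  rw [sum_add_distrib, PMF.sum_toReal_eq_one, PMF.sum_toReal_eq_one] at h
  unfold dTV
  linarith

lemma abs_dTV_le_one (p q : PMF X) : |dTV p q| ≤ 1 :=
  abs_le.2 ⟨by linarith [dTV_nonneg p q], dTV_le_one p q⟩

lemma dTV_self (p : PMF X) : dTV p p = 0 := by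
  simp [dTV]

end TotalVariation

lemma summable_pow_mul_of_abs_le {γ c : ℝ} (hγ0 : 0 ≤ γ) (hγ1 : γ < 1) {u : ℕ → ℝ}
    (hu : ∀ t, |u t| ≤ c) : Summable fun t => γ ^ t * u t :=
  .of_norm_bounded ((summable_geometric_of_lt_one hγ0 hγ1).mul_right c) fun t => by
    rw [norm_mul, norm_pow, Real.norm_of_nonneg hγ0, Real.norm_eq_abs]
    exact mul_le_mul_of_nonneg_left (hu t) (pow_nonneg hγ0 t)

lemma one_sub_mul_tsum_le_of_le_add {γ : ℝ} (hγ : 0 ≤ γ) {E B C : ℕ → ℝ}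
    (hE : Summable fun t => γ ^ t * E t) (hB : Summable fun t => γ ^ t * B t)
    (hC : Summable fun t => γ ^ t * C t)
    (h0 : E 0 ≤ C 0) (hsucc : ∀ t, E (t + 1) ≤ E t + B t + C (t + 1)) :
    (1 - γ) * ∑' t, γ ^ t * E t ≤ γ * ∑' t, γ ^ t * B t + ∑' t, γ ^ t * C t := by
  have hE' : Summable fun t => γ ^ (t + 1) * E (t + 1) := (summable_nat_add_iff 1).2 hE
  have hC' : Summable fun t => γ ^ (t + 1) * C (t + 1) := (summable_nat_add_iff 1).2 hC
  have hsplitE := hE.tsum_eq_zero_add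
  have hsplitC := hC.tsum_eq_zero_add
  simp only [pow_zero, one_mul] at hsplitE hsplitC
  have hstep : ∑' t, γ ^ (t + 1) * E (t + 1) ≤
      ∑' t, (γ * (γ ^ t * E t) + γ * (γ ^ t * B t) + γ ^ (t + 1) * C (t + 1)) :=
    hE'.tsum_le_tsum (fun t => by
      calc γ ^ (t + 1) * E (t + 1) ≤ γ ^ (t + 1) * (E t + B t + C (t + 1)) :=
            mul_le_mul_of_nonneg_left (hsucc t) (pow_nonneg hγ _)
        _ = _ := by ring)
      (((hE.mul_left γ).add (hB.mul_left γ)).add hC')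
  rw [((hE.mul_left γ).add (hB.mul_left γ)).tsum_add hC',
    (hE.mul_left γ).tsum_add (hB.mul_left γ), tsum_mul_left, tsum_mul_left] at hstep
  linarith

noncomputable section Chain

variable {S A : Type*}

def withPolicy (m : S → ℝ) (pol : S → PMF A) : S × A → ℝ :=
  fun p => m p.1 * (pol p.1 p.2).toReal

lemma withPolicy_sub (m m' : S → ℝ) (pol : S → PMF A) :
    withPolicy (m - m') pol = withPolicy m pol - withPolicy m' pol := by
  funext p
  simp only [withPolicy, Pi.sub_apply, sub_mul]

variable [Fintype S] [Fintype A]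

def push (P : S → A → PMF S) (d : S × A → ℝ) : S → ℝ :=
  fun s' => ∑ p, d p * (P p.1 p.2 s').toReal

def kernelGap (d : S × A → ℝ) (P Q : S → A → PMF S) : ℝ :=
  ∑ p, d p * dTV (P p.1 p.2) (Q p.1 p.2)

def policyGap (d : S × A → ℝ) (mu pol : S → PMF A) : ℝ :=
  ∑ p, d p * dTV (mu p.1) (pol p.1)

lemma kernelGap_self (d : S × A → ℝ) (P : S → A → PMF S) : kernelGap d P P = 0 := by
  simp [kernelGap, dTV_self]

lemma push_sub (P : S → A → PMF S) (d d' : S × A → ℝ) :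
    push P (d - d') = push P d - push P d' := by
  funext s'
  simp only [push, Pi.sub_apply, sub_mul, sum_sub_distrib]

lemma sum_withPolicy (m : S → ℝ) (pol : S → PMF A) :
    ∑ p, withPolicy m pol p = ∑ s, m s := by
  simp only [withPolicy, Fintype.sum_prod_type, ← mul_sum, PMF.sum_toReal_eq_one, mul_one]

lemma sum_push (P : S → A → PMF S) (d : S × A → ℝ) : ∑ s, push P d s = ∑ p, d p := by
  simp only [push]
  rw [sum_comm]
  simp only [← mul_sum, PMF.sum_toReal_eq_one, mul_one]

lemma sum_abs_withPolicy (m : S → ℝ) (pol : S → PMF A) :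
    ∑ p, |withPolicy m pol p| = ∑ s, |m s| := by
  simp only [withPolicy, abs_mul, abs_of_nonneg ENNReal.toReal_nonneg]
  exact sum_withPolicy (fun s => |m s|) pol

lemma sum_abs_push_le (P : S → A → PMF S) (d : S × A → ℝ) :
    ∑ s, |push P d s| ≤ ∑ p, |d p| := by
  calc ∑ s, |push P d s| ≤ ∑ s, push P (fun p => |d p|) s :=
        sum_le_sum fun s _ => (abs_sum_le_sum_abs _ _).trans_eq <| by
          simp only [push, abs_mul, abs_of_nonneg ENNReal.toReal_nonneg]
    _ = ∑ p, |d p| := sum_push P _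

lemma sum_abs_push_sub_push_le (P Q : S → A → PMF S) {d : S × A → ℝ} (hd : 0 ≤ d) :
    ∑ s, |push P d s - push Q d s| ≤ 2 * kernelGap d P Q := by
  have hpoint : ∀ s, |push P d s - push Q d s| ≤
      ∑ p, d p * |(P p.1 p.2 s).toReal - (Q p.1 p.2 s).toReal| := fun s => by
    simp only [push, ← sum_sub_distrib, ← mul_sub]
    refine (abs_sum_le_sum_abs _ _).trans_eq (sum_congr rfl fun p _ => ?_)
    rw [abs_mul, abs_of_nonneg (hd p)]
  calc ∑ s, |push P d s - push Q d s|
      ≤ ∑ s, ∑ p, d p * |(P p.1 p.2 s).toReal - (Q p.1 p.2 s).toReal| :=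
        sum_le_sum fun s _ => hpoint s
    _ = 2 * kernelGap d P Q := by
      rw [sum_comm, kernelGap, mul_sum]
      refine sum_congr rfl fun p _ => ?_
      rw [← mul_sum, dTV]
      ring

lemma sum_abs_withPolicy_sub {m : S → ℝ} (hm : 0 ≤ m) (mu pol : S → PMF A) :
    ∑ p, |withPolicy m mu p - withPolicy m pol p| = 2 * policyGap (withPolicy m mu) mu pol := by
  have hgap : policyGap (withPolicy m mu) mu pol = ∑ s, m s * dTV (mu s) (pol s) :=
    (sum_congr rfl fun p _ => mul_right_comm _ _ _).trans
      (sum_withPolicy (fun s => m s * dTV (mu s) (pol s)) mu)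
  rw [hgap, mul_sum, Fintype.sum_prod_type]
  refine sum_congr rfl fun s _ => ?_
  simp only [withPolicy, ← mul_sub, abs_mul, abs_of_nonneg (hm s), ← mul_sum, dTV]
  ring

lemma dDist_zero (P : S → A → PMF S) (pol : S → PMF A) (ρ0 : PMF S) :
    dDist P pol ρ0 0 = withPolicy (fun s => (ρ0 s).toReal) pol :=
  rfl

lemma dDist_succ (P : S → A → PMF S) (pol : S → PMF A) (ρ0 : PMF S) (t : ℕ) :
    dDist P pol ρ0 (t + 1) = withPolicy (push P (dDist P pol ρ0 t)) pol := by
  funext p'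
  simp only [dDist, withPolicy, push, sum_mul]

variable (P Q : S → A → PMF S) (mu pol : S → PMF A) (ρ0 : PMF S)

lemma dDist_nonneg (t : ℕ) : 0 ≤ dDist P pol ρ0 t := by
  induction t with
  | zero => exact fun p => mul_nonneg ENNReal.toReal_nonneg ENNReal.toReal_nonneg
  | succ t ih =>
    rw [dDist_succ]
    exact fun p => mul_nonneg (sum_nonneg fun q _ => mul_nonneg (ih q) ENNReal.toReal_nonneg)
      ENNReal.toReal_nonneg

lemma sum_dDist (t : ℕ) : ∑ p, dDist P pol ρ0 t p = 1 := by
  induction t with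
  | zero => rw [dDist_zero, sum_withPolicy, PMF.sum_toReal_eq_one]
  | succ t ih => rw [dDist_succ, sum_withPolicy, sum_push, ih]

lemma dDist_le_one (t : ℕ) (p : S × A) : dDist P pol ρ0 t p ≤ 1 :=
  (single_le_sum (fun q _ => dDist_nonneg P pol ρ0 t q) (mem_univ p)).trans_eq (sum_dDist ..)

lemma abs_sum_dDist_mul_le {X : S × A → ℝ} {c : ℝ} (hX : ∀ p, |X p| ≤ c) (t : ℕ) :
    |∑ p, dDist P pol ρ0 t p * X p| ≤ c :=
  calc |∑ p, dDist P pol ρ0 t p * X p| ≤ ∑ p, dDist P pol ρ0 t p * c :=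
        (abs_sum_le_sum_abs _ _).trans <| sum_le_sum fun p _ => by
          rw [abs_mul, abs_of_nonneg (dDist_nonneg P pol ρ0 t p)]
          exact mul_le_mul_of_nonneg_left (hX p) (dDist_nonneg P pol ρ0 t p)
    _ = c := by rw [← sum_mul, sum_dDist, one_mul]

lemma sum_abs_dDist_sub_le_two (t : ℕ) :
    ∑ p, |dDist P mu ρ0 t p - dDist Q pol ρ0 t p| ≤ 2 := by
  have h : ∑ p, |dDist P mu ρ0 t p - dDist Q pol ρ0 t p| ≤
      ∑ p, (dDist P mu ρ0 t p + dDist Q pol ρ0 t p) :=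
    sum_le_sum fun p _ => (abs_sub _ _).trans_eq <| by
      rw [abs_of_nonneg (dDist_nonneg P mu ρ0 t p), abs_of_nonneg (dDist_nonneg Q pol ρ0 t p)]
  rw [sum_add_distrib, sum_dDist, sum_dDist] at h
  linarith

lemma sum_abs_dDist_sub_zero :
    ∑ p, |dDist P mu ρ0 0 p - dDist Q pol ρ0 0 p| = 2 * policyGap (dDist P mu ρ0 0) mu pol :=
  sum_abs_withPolicy_sub (fun _ => ENNReal.toReal_nonneg) mu pol

lemma sum_abs_dDist_sub_succ_le (t : ℕ) :
    ∑ p, |dDist P mu ρ0 (t + 1) p - dDist Q pol ρ0 (t + 1) p| ≤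
      ∑ p, |dDist P mu ρ0 t p - dDist Q pol ρ0 t p| + 2 * kernelGap (dDist P mu ρ0 t) P Q
        + 2 * policyGap (dDist P mu ρ0 (t + 1)) mu pol := by
  have hd := dDist_nonneg P mu ρ0 t
  rw [dDist_succ, dDist_succ]
  set d := dDist P mu ρ0 t
  set d' := dDist Q pol ρ0 t
  have hpushd : 0 ≤ push P d := fun s =>
    sum_nonneg fun p _ => mul_nonneg (hd p) ENNReal.toReal_nonneg
  have hsplit : withPolicy (push P d) mu - withPolicy (push Q d') pol =
      (withPolicy (push P d) mu - withPolicy (push P d) pol)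
        + withPolicy (push P d - push Q d') pol := by
    rw [withPolicy_sub]
    abel
  have hpush : push P d - push Q d' = (push P d - push Q d) + push Q (d - d') := by
    rw [push_sub]
    abel
  calc ∑ p, |withPolicy (push P d) mu p - withPolicy (push Q d') pol p|
      = ∑ p, |(withPolicy (push P d) mu p - withPolicy (push P d) pol p)
          + withPolicy (push P d - push Q d') pol p| :=
        sum_congr rfl fun p _ => congrArg abs (congrFun hsplit p)
    _ ≤ 2 * policyGap (withPolicy (push P d) mu) mu pol + ∑ s, |push P d s - push Q d' s| := by
      refine (sum_abs_add_le _ _).trans_eq ?_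
      rw [sum_abs_withPolicy_sub hpushd, sum_abs_withPolicy]
      rfl
    _ ≤ 2 * policyGap (withPolicy (push P d) mu) mu pol
          + (2 * kernelGap d P Q + ∑ p, |d p - d' p|) := by
      gcongr
      refine (sum_congr rfl fun s _ => congrArg abs (congrFun hpush s)).trans_le ?_
      exact (sum_abs_add_le _ _).trans (add_le_add (sum_abs_push_sub_push_le P Q hd)
        (sum_abs_push_le Q _))
    _ = _ := by ring

variable {γ : ℝ}

lemma summable_pow_mul_sum_abs_dDist_sub (hγ0 : 0 ≤ γ) (hγ1 : γ < 1) :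
    Summable fun t => γ ^ t * ∑ p, |dDist P mu ρ0 t p - dDist Q pol ρ0 t p| :=
  summable_pow_mul_of_abs_le hγ0 hγ1 fun _ =>
    (abs_of_nonneg (sum_nonneg fun _ _ => abs_nonneg _)).trans_le (sum_abs_dDist_sub_le_two ..)

lemma sum_occ_mul (hγ0 : 0 ≤ γ) (hγ1 : γ < 1) (X : S × A → ℝ) :
    ∑ p, occ P pol ρ0 γ p * X p =
      (1 - γ) * ∑' t, γ ^ t * ∑ p, dDist P pol ρ0 t p * X p := by
  have hsumm : ∀ p, Summable fun t => γ ^ t * (dDist P pol ρ0 t p * X p) := fun p =>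
    summable_pow_mul_of_abs_le hγ0 hγ1 fun t => by
      rw [abs_mul, abs_of_nonneg (dDist_nonneg P pol ρ0 t p)]
      exact mul_le_of_le_one_left (abs_nonneg _) (dDist_le_one P pol ρ0 t p)
  simp only [occ, mul_assoc, ← tsum_mul_right, mul_sum]
  rw [← mul_sum, Summable.tsum_finsetSum fun p _ => hsumm p]

lemma abs_Jret_sub_le_tsum (r : S → A → ℝ) {rmax : ℝ} (hr : ∀ s a, |r s a| ≤ rmax)
    (hγ0 : 0 ≤ γ) (hγ1 : γ < 1) :
    |Jret P mu ρ0 r γ - Jret Q pol ρ0 r γ| ≤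
      rmax * ∑' t, γ ^ t * ∑ p, |dDist P mu ρ0 t p - dDist Q pol ρ0 t p| := by
  have hr' : ∀ p : S × A, |r p.1 p.2| ≤ rmax := fun p => hr p.1 p.2
  have hJ : ∀ (K : S → A → PMF S) (pol' : S → PMF A),
      Summable fun t => γ ^ t * ∑ p, dDist K pol' ρ0 t p * r p.1 p.2 := fun K pol' =>
    summable_pow_mul_of_abs_le hγ0 hγ1 (abs_sum_dDist_mul_le K pol' ρ0 hr')
  rw [Jret, Jret, ← (hJ P mu).tsum_sub (hJ Q pol), ← tsum_mul_left, ← Real.norm_eq_abs]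
  refine tsum_of_norm_bounded
    ((summable_pow_mul_sum_abs_dDist_sub P Q mu pol ρ0 hγ0 hγ1).mul_left rmax).hasSum fun t => ?_
  rw [Real.norm_eq_abs, ← mul_sub, ← sum_sub_distrib, abs_mul,
    abs_of_nonneg (pow_nonneg hγ0 t), mul_left_comm]
  refine mul_le_mul_of_nonneg_left ((abs_sum_le_sum_abs _ _).trans ?_) (pow_nonneg hγ0 t)
  rw [mul_sum]
  refine sum_le_sum fun p _ => ?_
  rw [← sub_mul, abs_mul, mul_comm]
  exact mul_le_mul_of_nonneg_right (hr' p) (abs_nonneg _)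

theorem abs_Jret_sub_le (r : S → A → ℝ) {rmax : ℝ} (hrmax : 0 ≤ rmax)
    (hr : ∀ s a, |r s a| ≤ rmax) (hγ0 : 0 ≤ γ) (hγ1 : γ < 1) :
    |Jret P mu ρ0 r γ - Jret Q pol ρ0 r γ| ≤
      2 * rmax / (1 - γ) ^ 2 *
        (γ * kernelGap (occ P mu ρ0 γ) P Q + policyGap (occ P mu ρ0 γ) mu pol) := by
  have hK : kernelGap (occ P mu ρ0 γ) P Q =
      (1 - γ) * ∑' t, γ ^ t * kernelGap (dDist P mu ρ0 t) P Q :=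
    sum_occ_mul P mu ρ0 hγ0 hγ1 _
  have hG : policyGap (occ P mu ρ0 γ) mu pol =
      (1 - γ) * ∑' t, γ ^ t * policyGap (dDist P mu ρ0 t) mu pol :=
    sum_occ_mul P mu ρ0 hγ0 hγ1 _
  have hrec : (1 - γ) * ∑' t, γ ^ t * ∑ p, |dDist P mu ρ0 t p - dDist Q pol ρ0 t p| ≤
      2 * (γ * ∑' t, γ ^ t * kernelGap (dDist P mu ρ0 t) P Q
        + ∑' t, γ ^ t * policyGap (dDist P mu ρ0 t) mu pol) := by
    have hgapSummable : ∀ X : S × A → ℝ, (∀ p, |X p| ≤ 1) →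
        Summable fun t => γ ^ t * (2 * ∑ p, dDist P mu ρ0 t p * X p) := fun X hX =>
      summable_pow_mul_of_abs_le hγ0 hγ1 fun t => by
        rw [abs_mul, abs_two]
        exact mul_le_mul_of_nonneg_left (abs_sum_dDist_mul_le P mu ρ0 hX t) zero_le_two
    have h := one_sub_mul_tsum_le_of_le_add hγ0
      (summable_pow_mul_sum_abs_dDist_sub P Q mu pol ρ0 hγ0 hγ1)
      (hgapSummable _ fun _ => abs_dTV_le_one _ _) (hgapSummable _ fun _ => abs_dTV_le_one _ _)
      (sum_abs_dDist_sub_zero P Q mu pol ρ0).le (sum_abs_dDist_sub_succ_le P Q mu pol ρ0)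
    simp only [mul_left_comm _ (2 : ℝ), tsum_mul_left] at h
    unfold kernelGap policyGap
    linarith
  have h1γ : 0 < 1 - γ := sub_pos.2 hγ1
  refine (abs_Jret_sub_le_tsum P Q mu pol ρ0 r hr hγ0 hγ1).trans ?_
  rw [hK, hG]
  generalize ∑' t, γ ^ t * kernelGap (dDist P mu ρ0 t) P Q = SK at hrec ⊢
  generalize ∑' t, γ ^ t * policyGap (dDist P mu ρ0 t) mu pol = SG at hrec ⊢
  rw [show 2 * rmax / (1 - γ) ^ 2 * (γ * ((1 - γ) * SK) + (1 - γ) * SG)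
      = rmax * (2 * (γ * SK + SG) / (1 - γ)) by field_simp]
  exact mul_le_mul_of_nonneg_left ((le_div_iff₀' h1γ).2 hrec) hrmax

end Chain

theorem offline_performance_bound_tv_general
    {S A : Type*} [Fintype S] [Fintype A]
    (Psrc Ptar : S → A → PMF S) (polD pol : S → PMF A) (ρ0 : PMF S)
    (r : S → A → ℝ) (rmax : ℝ) (hrmax : 0 ≤ rmax) (hr : ∀ s a, |r s a| ≤ rmax)
    (γ : ℝ) (hγ0 : 0 ≤ γ) (hγ1 : γ < 1) :
    Jret Ptar pol ρ0 r γ - Jret Psrc pol ρ0 r γ ≥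
      -(4 * rmax / (1 - γ) ^ 2) *
        (∑ s : S, stateOcc Psrc polD ρ0 γ s * dTV (polD s) (pol s))
      - (2 * γ * rmax / (1 - γ) ^ 2) *
        ∑ p : S × A, occ Psrc polD ρ0 γ p * dTV (Psrc p.1 p.2) (Ptar p.1 p.2) := by
  have hν : ∑ s, stateOcc Psrc polD ρ0 γ s * dTV (polD s) (pol s) =
      policyGap (occ Psrc polD ρ0 γ) polD pol := by
    simp only [stateOcc, policyGap, sum_mul, Fintype.sum_prod_type]
  have hmodel := abs_le.1 <| abs_Jret_sub_le Psrc Ptar polD pol ρ0 r hrmax hr hγ0 hγ1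
  have hpolicy := abs_le.1 <| abs_Jret_sub_le Psrc Psrc polD pol ρ0 r hrmax hr hγ0 hγ1
  rw [kernelGap_self, mul_zero, zero_add] at hpolicy
  rw [hν]
  unfold kernelGap at hmodel
  linear_combination hmodel.2 + hpolicy.1

/-- offline performance bound in total-variation form, corrected
intermediate form of Theorem 4: for kernels `P_src, P_tar` and policies `pol_D, pol`,
`J[P_tar](pol) − J[P_src](pol) ≥ −(4·r_max/(1−γ)²) Σ_s ν[P_src,pol_D](s)·D_TV(pol_D(s), pol(s))
 − (2γ·r_max/(1−γ)²) Σ_{(s,a)} ρ[P_src,pol_D](s,a)·D_TV(P_src(s,a), P_tar(s,a))`. -/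
theorem offline_performance_bound_tv
    {S A : Type*} [Fintype S] [Fintype A] [Nonempty S] [Nonempty A]
    (Psrc Ptar : S → A → PMF S) (polD pol : S → PMF A) (ρ0 : PMF S)
    (r : S → A → ℝ) (rmax : ℝ) (hrmax : 0 ≤ rmax) (hr : ∀ s a, |r s a| ≤ rmax)
    (γ : ℝ) (hγ0 : 0 ≤ γ) (hγ1 : γ < 1) :
    Jret Ptar pol ρ0 r γ - Jret Psrc pol ρ0 r γ ≥
      -(4 * rmax / (1 - γ) ^ 2) *
        (∑ s : S, stateOcc Psrc polD ρ0 γ s * dTV (polD s) (pol s))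
      - (2 * γ * rmax / (1 - γ) ^ 2) *
        ∑ p : S × A, occ Psrc polD ρ0 γ p * dTV (Psrc p.1 p.2) (Ptar p.1 p.2) :=
  offline_performance_bound_tv_general Psrc Ptar polD pol ρ0 r rmax hrmax hr γ hγ0 hγ1
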